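/- Fix n ≥ 3 and ρ* ∈ (0,1)^n. There exists ε₀ > 0 with the following property: for every initial point ρ⁰ ∈ [0,1)^n with ‖ρ⁰ − g¹‖₂ < ε₀ and ρ⁰_i < 1 for all i, there exists a finite t ≥ 0 such that the EM iterate ρ^t (defined by ρ^{s+1} = F(ρ^s) starting from ρ⁰) satisfies ‖ρ^t − g¹‖₂ > ε₀. In particular, the EM iteration started at any such point does not converge to the boundary fixed point g¹. -/

import Mathlib

/-!
Write `w = 1 - ρ₁²`. Clearing the pole at `ρ₁ = 1` of the common denominator
`1 + Σₖ ρₖ²/(1 - ρₖ²)` of the `λⱼ` turns `1 - F₁(ρ)²` into `w + w² Φ(ρ)/Ψ(ρ)`, with `Φ = gapNum`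
and `Ψ = gapDen` continuous up to the boundary. At `g¹` one has `Ψ = 1`, while `Φ` becomes a sum,
over ordered pairs of distinct leaves other than the first, of the positive terms
`ρ*ⱼρ*ₖ (1 - ρ*₁²) · g¹ⱼ/(1 - g¹ⱼ²) · g¹ₖ/(1 - g¹ₖ²)`; such pairs exist exactly when `n ≥ 3`.
So near `g¹` the map raises `w` to at least `w (1 + c w)`, and along an orbit staying near `g¹`
the quantity `w ≤ 1` would grow geometrically.
-/

open Finset Filter

/-- Conditional-mean coefficients for the one-latent-node Gaussian tree model. -/
noncomputable def lam (n : ℕ) (ρ : Fin n → ℝ) (j : Fin n) : ℝ :=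
  (ρ j / (1 - ρ j ^ 2)) / (1 + ∑ k, ρ k ^ 2 / (1 - ρ k ^ 2))

/-- Population EM update map `F` for true correlations `ρs`. -/
noncomputable def emF (n : ℕ) (ρs ρ : Fin n → ℝ) (i : Fin n) : ℝ :=
  (ρ i + ∑ j ∈ Finset.univ.erase i, (ρs i * ρs j - ρ i * ρ j) * lam n ρ j) /
    Real.sqrt (1 + ∑ j, ∑ k ∈ Finset.univ.erase j,
      (ρs j * ρs k - ρ j * ρ k) * lam n ρ j * lam n ρ k)

/-- The boundary fixed point `g¹`: first coordinate `1`, and `ρ*_1 ρ*_j` elsewhere. -/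
noncomputable def gvec (n : ℕ) (h : 0 < n) (ρs : Fin n → ℝ) : Fin n → ℝ :=
  fun i => if i = ⟨0, h⟩ then 1 else ρs ⟨0, h⟩ * ρs i


open Topology

theorem exists_iterate_notMem_of_mul_one_add_le {X : Type*} {f : X → X} {v : X → ℝ} {s : Set X}
    {B c : ℝ} (hc : 0 < c) (hB : ∀ x, v x ≤ B)
    (hf : ∀ x ∈ s, 0 < v x → v x * (1 + c * v x) ≤ v (f x)) {x : X} (hx : 0 < v x) :
    ∃ t, f^[t] x ∉ s := by
  by_contra! hs
  set q := 1 + c * v x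
  have hq : 1 < q := lt_add_of_pos_right 1 (mul_pos hc hx)
  have hgrowth : ∀ t : ℕ, v x * q ^ t ≤ v (f^[t] x) := by
    intro t
    induction t with
    | zero => simp
    | succ t ih =>
      have hvx : v x ≤ v (f^[t] x) := (le_mul_of_one_le_right hx.le (one_le_pow₀ hq.le)).trans ih
      have hpos : 0 < v (f^[t] x) := hx.trans_le hvx
      rw [Function.iterate_succ_apply', pow_succ, ← mul_assoc]
      have hq' : q ≤ 1 + c * v (f^[t] x) := by simp only [q]; gcongr
      calc v x * q ^ t * q ≤ v (f^[t] x) * q := by gcongr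
        _ ≤ v (f^[t] x) * (1 + c * v (f^[t] x)) := by gcongr
        _ ≤ v (f (f^[t] x)) := hf _ (hs t) hpos
  obtain ⟨t, ht⟩ := pow_unbounded_of_one_lt (B / v x) hq
  linarith [(div_lt_iff₀' hx).1 ht, hgrowth t, hB (f^[t] x)]

theorem dist_le_sqrt_sum_sq {ι : Type*} [Fintype ι] (x y : ι → ℝ) :
    dist x y ≤ √(∑ i, (x i - y i) ^ 2) :=
  (dist_pi_le_iff (Real.sqrt_nonneg _)).2 fun i => by
    rw [Real.dist_eq]
    exact Real.abs_le_sqrt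
      (single_le_sum (f := fun i => (x i - y i) ^ 2) (fun _ _ => sq_nonneg _) (mem_univ i))

theorem sum_sum_erase_eq {ι M : Type*} [Fintype ι] [DecidableEq ι] [AddCommMonoid M]
    (f : ι → ι → M) (i : ι) :
    ∑ j, ∑ k ∈ univ.erase j, f j k
      = ∑ k ∈ univ.erase i, f i k + ∑ j ∈ univ.erase i, f j i
        + ∑ j ∈ univ.erase i, ∑ k ∈ (univ.erase i).erase j, f j k := by
  have hsplit : ∀ j ∈ univ.erase i,
      ∑ k ∈ univ.erase j, f j k = ∑ k ∈ (univ.erase i).erase j, f j k + f j i := by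
    intro j hj
    have hi : i ∈ univ.erase j := mem_erase.2 ⟨(ne_of_mem_erase hj).symm, mem_univ i⟩
    rw [← sum_erase_add _ _ hi, erase_right_comm]
  rw [← sum_erase_add univ _ (mem_univ i), sum_congr rfl hsplit, sum_add_distrib]
  abel

section Algebra

variable {n : ℕ} (ρs : Fin n → ℝ) (i : Fin n)

noncomputable def lamNum (ρ : Fin n → ℝ) (j : Fin n) : ℝ := ρ j / (1 - ρ j ^ 2)

noncomputable def lamDen (ρ : Fin n → ℝ) : ℝ := 1 + ∑ k, ρ k ^ 2 / (1 - ρ k ^ 2)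

noncomputable def emNum (ρ : Fin n → ℝ) : ℝ :=
  ρ i + ∑ j ∈ univ.erase i, (ρs i * ρs j - ρ i * ρ j) * lam n ρ j

noncomputable def emDenSq (ρ : Fin n → ℝ) : ℝ :=
  1 + ∑ j, ∑ k ∈ univ.erase j, (ρs j * ρs k - ρ j * ρ k) * lam n ρ j * lam n ρ k

noncomputable def crossSum (ρ : Fin n → ℝ) : ℝ :=
  ∑ j ∈ univ.erase i, (ρs i * ρs j - ρ i * ρ j) * lamNum ρ j

noncomputable def restSqSum (ρ : Fin n → ℝ) : ℝ :=
  ∑ j ∈ univ.erase i, ρ j ^ 2 / (1 - ρ j ^ 2)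

noncomputable def pairSum (ρ : Fin n → ℝ) : ℝ :=
  ∑ j ∈ univ.erase i, ∑ k ∈ (univ.erase i).erase j,
    (ρs j * ρs k - ρ j * ρ k) * lamNum ρ j * lamNum ρ k

/-- `gapNum` and `gapDen` are `lamDen² (ρᵢ² emDenSq - emNum²)` and
`(1 - ρᵢ²)² lamDen² emDenSq` with the pole of `lamDen` at `ρᵢ = 1` cleared. -/
noncomputable def gapNum (ρ : Fin n → ℝ) : ℝ :=
  ρ i ^ 2 * pairSum ρs i ρ - 2 * ρ i * (1 + restSqSum i ρ) * crossSum ρs i ρ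
    - crossSum ρs i ρ ^ 2

noncomputable def gapDen (ρ : Fin n → ℝ) : ℝ :=
  (ρ i ^ 2 + (1 - ρ i ^ 2) * (1 + restSqSum i ρ)) ^ 2
    + 2 * (1 - ρ i ^ 2) * ρ i * crossSum ρs i ρ + (1 - ρ i ^ 2) ^ 2 * pairSum ρs i ρ

variable {ρs i} {ρ : Fin n → ℝ}

theorem lam_eq (j : Fin n) : lam n ρ j = lamNum ρ j / lamDen ρ := rfl

theorem emF_eq_emNum_div : emF n ρs ρ i = emNum ρs i ρ / √(emDenSq ρs ρ) := rfl

theorem lamDen_eq : lamDen ρ = 1 + ρ i ^ 2 / (1 - ρ i ^ 2) + restSqSum i ρ := by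
  rw [lamDen, restSqSum, ← sum_erase_add univ _ (mem_univ i)]
  ring

theorem one_le_lamDen (hρ : ∀ j, ρ j ^ 2 < 1) : 1 ≤ lamDen ρ :=
  le_add_of_nonneg_right <| sum_nonneg fun k _ => div_nonneg (sq_nonneg _) (by linarith [hρ k])

theorem emNum_eq : emNum ρs i ρ = ρ i + crossSum ρs i ρ / lamDen ρ := by
  rw [emNum, crossSum, sum_div]
  congr 1
  exact sum_congr rfl fun j _ => by rw [lam_eq]; ring

theorem emDenSq_eq :
    emDenSq ρs ρ = 1 + (2 * lamNum ρ i * crossSum ρs i ρ + pairSum ρs i ρ) / lamDen ρ ^ 2 := by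
  have hlam : ∀ j k, (ρs j * ρs k - ρ j * ρ k) * lam n ρ j * lam n ρ k
      = (ρs j * ρs k - ρ j * ρ k) * lamNum ρ j * lamNum ρ k / lamDen ρ ^ 2 := fun j k => by
    rw [lam_eq, lam_eq]; ring
  simp only [emDenSq, sum_sum_erase_eq _ i, hlam, ← sum_div, crossSum, pairSum, mul_sum,
    ← sum_add_distrib]
  congr 3
  funext k
  ring

theorem gapNum_eq (hT : lamDen ρ ≠ 0) :
    gapNum ρs i ρ = lamDen ρ ^ 2 * (ρ i ^ 2 * emDenSq ρs ρ - emNum ρs i ρ ^ 2) := by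
  have hlamNum : ρ i * lamNum ρ i = lamDen ρ - 1 - restSqSum i ρ := by
    rw [lamDen_eq (i := i), lamNum]; ring
  rw [emDenSq_eq, emNum_eq, gapNum]
  field_simp
  linear_combination (-2 * ρ i * crossSum ρs i ρ) * hlamNum

theorem gapDen_eq (hw : 1 - ρ i ^ 2 ≠ 0) (hT : lamDen ρ ≠ 0) :
    gapDen ρs i ρ = (1 - ρ i ^ 2) ^ 2 * lamDen ρ ^ 2 * emDenSq ρs ρ := by
  have hwT : (1 - ρ i ^ 2) * lamDen ρ = ρ i ^ 2 + (1 - ρ i ^ 2) * (1 + restSqSum i ρ) := by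
    rw [lamDen_eq (i := i)]; field_simp; ring
  have hwlamNum : (1 - ρ i ^ 2) * lamNum ρ i = ρ i := by
    rw [lamNum]; field_simp
  rw [gapDen, ← hwT, emDenSq_eq]
  field_simp
  linear_combination (-2 * crossSum ρs i ρ) * hwlamNum

theorem one_sub_emF_sq_eq (hρ : ∀ j, ρ j ^ 2 < 1) (hΨ : 0 < gapDen ρs i ρ) :
    1 - emF n ρs ρ i ^ 2
      = (1 - ρ i ^ 2) + (1 - ρ i ^ 2) ^ 2 * (gapNum ρs i ρ / gapDen ρs i ρ) := by
  have hw : 1 - ρ i ^ 2 ≠ 0 := by linarith [hρ i]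
  have hT : lamDen ρ ≠ 0 := by linarith [one_le_lamDen hρ]
  have hQ : 0 < emDenSq ρs ρ :=
    pos_of_mul_pos_right (gapDen_eq hw hT ▸ hΨ) (by positivity)
  rw [emF_eq_emNum_div, div_pow, Real.sq_sqrt hQ.le, gapNum_eq hT, gapDen_eq hw hT]
  field_simp
  ring

end Algebra

section Continuity

variable {n : ℕ} (ρs : Fin n → ℝ) {i : Fin n} {x : Fin n → ℝ}

theorem continuousAt_lamNum {j : Fin n} (hx : 1 - x j ^ 2 ≠ 0) :
    ContinuousAt (fun ρ => lamNum ρ j) x := by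
  unfold lamNum; fun_prop (disch := exact hx)

variable (hx : ∀ j ∈ univ.erase i, 1 - x j ^ 2 ≠ 0)
include hx

theorem continuousAt_crossSum : ContinuousAt (crossSum ρs i) x :=
  tendsto_finsetSum _ fun j hj =>
    (continuousAt_const.sub (by fun_prop)).mul (continuousAt_lamNum (hx j hj))

theorem continuousAt_restSqSum : ContinuousAt (restSqSum i) x :=
  tendsto_finsetSum _ fun j hj => (by fun_prop (disch := exact hx j hj) : ContinuousAt _ x)

theorem continuousAt_pairSum : ContinuousAt (pairSum ρs i) x :=
  tendsto_finsetSum _ fun j hj => tendsto_finsetSum _ fun k hk =>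
    ((continuousAt_const.sub (by fun_prop)).mul (continuousAt_lamNum (hx j hj))).mul
      (continuousAt_lamNum (hx k (mem_of_mem_erase hk)))

theorem continuousAt_gapNum : ContinuousAt (gapNum ρs i) x := by
  have hr : ContinuousAt (fun ρ : Fin n → ℝ => ρ i) x := (continuous_apply i).continuousAt
  have hU := continuousAt_crossSum ρs hx
  exact (((hr.pow 2).mul (continuousAt_pairSum ρs hx)).sub (((continuousAt_const.mul hr).mul
    (continuousAt_const.add (continuousAt_restSqSum hx))).mul hU)).sub (hU.pow 2)

theorem continuousAt_gapDen : ContinuousAt (gapDen ρs i) x := by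
  have hr : ContinuousAt (fun ρ : Fin n → ℝ => ρ i) x := (continuous_apply i).continuousAt
  have hw : ContinuousAt (fun ρ : Fin n → ℝ => 1 - ρ i ^ 2) x := continuousAt_const.sub (hr.pow 2)
  exact ((((hr.pow 2).add (hw.mul (continuousAt_const.add (continuousAt_restSqSum hx)))).pow 2).add
    (((continuousAt_const.mul hw).mul hr).mul (continuousAt_crossSum ρs hx))).add
    ((hw.pow 2).mul (continuousAt_pairSum ρs hx))

end Continuity

section BoundaryFixedPoint

variable {n : ℕ} (h : 0 < n) (ρs : Fin n → ℝ)

theorem gvec_apply_zero : gvec n h ρs ⟨0, h⟩ = 1 := if_pos rfl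

theorem gvec_apply_of_ne {j : Fin n} (hj : j ≠ ⟨0, h⟩) : gvec n h ρs j = ρs ⟨0, h⟩ * ρs j :=
  if_neg hj

theorem crossSum_gvec : crossSum ρs ⟨0, h⟩ (gvec n h ρs) = 0 :=
  sum_eq_zero fun j hj => by
    rw [gvec_apply_zero, gvec_apply_of_ne h ρs (ne_of_mem_erase hj)]; ring

theorem gapNum_gvec : gapNum ρs ⟨0, h⟩ (gvec n h ρs) = pairSum ρs ⟨0, h⟩ (gvec n h ρs) := by
  rw [gapNum, crossSum_gvec, gvec_apply_zero]; ring

theorem gapDen_gvec : gapDen ρs ⟨0, h⟩ (gvec n h ρs) = 1 := by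
  rw [gapDen, crossSum_gvec, gvec_apply_zero]; norm_num

variable {ρs} (hρs : ∀ i, ρs i ∈ Set.Ioo (0 : ℝ) 1)
include hρs

theorem gvec_mem_Ioo {j : Fin n} (hj : j ≠ ⟨0, h⟩) : gvec n h ρs j ∈ Set.Ioo 0 1 := by
  obtain ⟨h0, h1⟩ := hρs ⟨0, h⟩
  obtain ⟨hj0, hj1⟩ := hρs j
  rw [gvec_apply_of_ne h ρs hj]
  exact ⟨mul_pos h0 hj0, by nlinarith⟩

theorem pairSum_gvec_pos (hn : 3 ≤ n) : 0 < pairSum ρs ⟨0, h⟩ (gvec n h ρs) := by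
  have hrest : (univ.erase (⟨0, h⟩ : Fin n)).Nontrivial := by
    rw [← one_lt_card_iff_nontrivial, card_erase_of_mem (mem_univ _), card_univ,
      Fintype.card_fin]
    omega
  have hlamNum : ∀ j ∈ univ.erase (⟨0, h⟩ : Fin n), 0 < lamNum (gvec n h ρs) j := fun j hj => by
    obtain ⟨hg0, hg1⟩ := gvec_mem_Ioo h hρs (ne_of_mem_erase hj)
    exact div_pos hg0 (by nlinarith)
  refine sum_pos (fun j hj => sum_pos (fun k hk => ?_) hrest.erase_nonempty) hrest.nonempty
  have hk' := mem_of_mem_erase hk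
  rw [gvec_apply_of_ne h ρs (ne_of_mem_erase hj), gvec_apply_of_ne h ρs (ne_of_mem_erase hk')]
  have hcov : 0 < ρs j * ρs k - ρs ⟨0, h⟩ * ρs j * (ρs ⟨0, h⟩ * ρs k) := by
    rw [show ρs j * ρs k - ρs ⟨0, h⟩ * ρs j * (ρs ⟨0, h⟩ * ρs k)
      = ρs j * ρs k * (1 - ρs ⟨0, h⟩ ^ 2) by ring]
    obtain ⟨h0, h1⟩ := hρs ⟨0, h⟩
    exact mul_pos (mul_pos (hρs j).1 (hρs k).1) (by nlinarith)
  exact mul_pos (mul_pos hcov (hlamNum j hj)) (hlamNum k hk')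

theorem eventually_mul_one_add_le_one_sub_emF_sq (hn : 3 ≤ n) :
    ∃ c > 0, ∀ᶠ ρ in 𝓝 (gvec n h ρs), 0 < 1 - ρ ⟨0, h⟩ ^ 2 →
      (1 - ρ ⟨0, h⟩ ^ 2) * (1 + c * (1 - ρ ⟨0, h⟩ ^ 2)) ≤ 1 - emF n ρs ρ ⟨0, h⟩ ^ 2 := by
  set i : Fin n := ⟨0, h⟩
  set g := gvec n h ρs
  have hg : ∀ j ∈ univ.erase i, g j ^ 2 < 1 := fun j hj => by
    obtain ⟨h0, h1⟩ := gvec_mem_Ioo h hρs (ne_of_mem_erase hj)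
    nlinarith
  have hg' : ∀ j ∈ univ.erase i, 1 - g j ^ 2 ≠ 0 := fun j hj => by linarith [hg j hj]
  have hΦ : 0 < gapNum ρs i g := gapNum_gvec h ρs ▸ pairSum_gvec_pos h hρs hn
  refine ⟨gapNum ρs i g / 4, by positivity, ?_⟩
  have hNum : ∀ᶠ ρ in 𝓝 g, gapNum ρs i g / 2 < gapNum ρs i ρ :=
    (continuousAt_gapNum ρs hg').eventually (lt_mem_nhds (half_lt_self hΦ))
  have hDen : ∀ᶠ ρ in 𝓝 g, gapDen ρs i ρ ∈ Set.Ioo (1 / 2) 2 :=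
    (continuousAt_gapDen ρs hg').eventually
      (Ioo_mem_nhds (by rw [gapDen_gvec]; norm_num) (by rw [gapDen_gvec]; norm_num))
  have hcoord : ∀ᶠ ρ in 𝓝 g, ∀ j ∈ univ.erase i, ρ j ^ 2 < 1 :=
    (eventually_all_finset _).2 fun j hj =>
      ((continuous_apply j).pow 2).continuousAt.eventually (gt_mem_nhds (hg j hj))
  filter_upwards [hNum, hDen, hcoord] with ρ hN hD hρ hw
  have hall : ∀ j, ρ j ^ 2 < 1 := fun j => by
    by_cases hj : j = i
    · rw [hj]; linarith
    · exact hρ j (mem_erase.2 ⟨hj, mem_univ j⟩)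
  rw [one_sub_emF_sq_eq hall (by linarith [hD.1])]
  have hratio : gapNum ρs i g / 4 ≤ gapNum ρs i ρ / gapDen ρs i ρ := by
    rw [div_le_div_iff₀ (by norm_num) (by linarith [hD.1])]
    nlinarith [hD.2]
  nlinarith [mul_le_mul_of_nonneg_left hratio (sq_nonneg (1 - ρ i ^ 2))]

end BoundaryFixedPoint

/-- The EM iteration escapes an `ε₀`-neighborhood of the boundary fixed point `g¹`:
started at any point of `[0,1)^n` within distance `ε₀` of `g¹`, some iterate leaves
the `ε₀`-ball around `g¹`. -/
theorem em_escapes_boundary_fixed_point (n : ℕ) (hn : 3 ≤ n) (ρs : Fin n → ℝ)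
    (hρs : ∀ i, ρs i ∈ Set.Ioo (0 : ℝ) 1) :
    ∃ ε₀ > (0 : ℝ), ∀ ρ0 : Fin n → ℝ, (∀ i, ρ0 i ∈ Set.Ico (0 : ℝ) 1) →
      Real.sqrt (∑ i, (ρ0 i - gvec n (by omega) ρs i) ^ 2) < ε₀ →
      ∃ t : ℕ, ε₀ < Real.sqrt (∑ i, ((emF n ρs)^[t] ρ0 i - gvec n (by omega) ρs i) ^ 2) := by
  have h : 0 < n := by omega
  obtain ⟨c, hc, hdrift⟩ := eventually_mul_one_add_le_one_sub_emF_sq h hρs hn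
  obtain ⟨ε, hε, hball⟩ := Metric.nhds_basis_closedBall.mem_iff.1 hdrift
  refine ⟨ε, hε, fun ρ0 hρ0 _ => ?_⟩
  have hv0 : 0 < 1 - ρ0 ⟨0, h⟩ ^ 2 := by
    obtain ⟨h0, h1⟩ := hρ0 ⟨0, h⟩
    nlinarith
  obtain ⟨t, ht⟩ := exists_iterate_notMem_of_mul_one_add_le (f := emF n ρs)
    (v := fun ρ => 1 - ρ ⟨0, h⟩ ^ 2) hc (fun ρ => sub_le_self 1 (sq_nonneg _))
    (fun ρ hρ => hball hρ) hv0
  exact ⟨t, lt_of_not_ge fun hle => ht ((dist_le_sqrt_sum_sq _ _).trans hle)⟩
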